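/- arXiv:1605.08987 — 2 statements merged into one kernel-verified Lean document; each statement's English description precedes it below -/
import Mathlib

section
/- Let (φ, G) and (φ', G') be pseudo-curve generators with pseudo-curves PC and PC'. Then H(PC, PC') ≤ sup_{θ ∈ S¹} H(PC^θ, PC'^θ), and moreover sup_{θ ∈ S¹} H(PC^θ, PC'^θ) = d∞((φ,G),(φ',G')), where PC^θ and PC'^θ denote the fibers over θ regarded as subsets of Ω. -/
/-!
Since `G ∩ G'` is dense and the generators are continuous, both pseudo-curves are already the
closures of the graphs over `G ∩ G'`. A point `(θ, y)` of `PC` is then the projection of a point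
`(θ, y, y')` of the closure of `{(θ, φ θ, φ' θ) : θ ∈ G ∩ G'}`, which is compact, and `(θ, y')`
lies on `PC'` with `|y - y'| ≤ d∞`. This vertical matching bounds every fiberwise Hausdorff
distance and the global one by `d∞`. Conversely, over `θ ∈ G ∩ G'` both fibers are single
points, at distance `|φ θ - φ' θ|`.
-/

open Set Metric

/-- The graph of `φ` over `G`. -/
def graphOn (G : Set UnitAddCircle) (φ : UnitAddCircle → ℝ) : Set (UnitAddCircle × ℝ) :=
  (fun θ => (θ, φ θ)) '' G

open Filter Topology

section HausdorffDist

variable {X Y : Type*} [PseudoMetricSpace X] [PseudoMetricSpace Y]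

theorem hausdorffDist_le_of_forall_exists_snd {A B : Set (X × Y)} {d : ℝ} (hd : 0 ≤ d)
    (hAB : ∀ p ∈ A, ∃ y, (p.1, y) ∈ B ∧ dist p.2 y ≤ d)
    (hBA : ∀ p ∈ B, ∃ y, (p.1, y) ∈ A ∧ dist p.2 y ≤ d) :
    hausdorffDist A B ≤ d := by
  have vertical : ∀ {C D : Set (X × Y)}, (∀ p ∈ C, ∃ y, (p.1, y) ∈ D ∧ dist p.2 y ≤ d) →
      ∀ p ∈ C, ∃ q ∈ D, dist p q ≤ d := by
    intro C D h p hp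
    obtain ⟨y, hyD, hy⟩ := h p hp
    exact ⟨(p.1, y), hyD, by simpa [Prod.dist_eq] using hy⟩
  exact hausdorffDist_le_of_mem_dist hd (vertical hAB) (vertical hBA)

theorem hausdorffDist_inter_prod_le_of_forall_exists_snd {A B : Set (X × Y)} {t : Set Y}
    {d : ℝ} (hd : 0 ≤ d)
    (hAB : ∀ p ∈ A, ∃ y ∈ t, (p.1, y) ∈ B ∧ dist p.2 y ≤ d)
    (hBA : ∀ p ∈ B, ∃ y ∈ t, (p.1, y) ∈ A ∧ dist p.2 y ≤ d) (s : Set X) :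
    hausdorffDist (A ∩ s ×ˢ t) (B ∩ s ×ˢ t) ≤ d := by
  have restrict : ∀ {C D : Set (X × Y)}, (∀ p ∈ C, ∃ y ∈ t, (p.1, y) ∈ D ∧ dist p.2 y ≤ d) →
      ∀ p ∈ C ∩ s ×ˢ t, ∃ y, (p.1, y) ∈ D ∩ s ×ˢ t ∧ dist p.2 y ≤ d := by
    intro C D h p hp
    obtain ⟨y, hyt, hyD, hy⟩ := h p hp.1
    exact ⟨y, ⟨hyD, hp.2.1, hyt⟩, hy⟩
  exact hausdorffDist_le_of_forall_exists_snd hd (restrict hAB) (restrict hBA)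

end HausdorffDist

section PseudoCurve

variable {G G' : Set UnitAddCircle} {φ φ' : UnitAddCircle → ℝ}

theorem eq_of_mk_mem_closure_graphOn {θ : UnitAddCircle} {y : ℝ}
    (hφ : ContinuousWithinAt φ G θ) (h : (θ, y) ∈ closure (graphOn G φ)) : y = φ θ := by
  by_contra hne
  obtain ⟨U, V, hU, hV, hyU, hφV, hUV⟩ := t2_separation hne
  obtain ⟨W, hW, hWG⟩ := mem_nhdsWithin_iff_exists_mem_nhds_inter.1 (hφ (hV.mem_nhds hφV))
  obtain ⟨_, ⟨hxW, hxU⟩, x, hxG, rfl⟩ :=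
    mem_closure_iff_nhds.1 h _ (prod_mem_nhds hW (hU.mem_nhds hyU))
  exact hUV.le_bot ⟨hxU, hWG ⟨hxW, hxG⟩⟩

theorem closure_graphOn_inter_prod_singleton {θ : UnitAddCircle} {t : Set ℝ} (hθ : θ ∈ G)
    (hφ : ContinuousOn φ G) (hφt : φ θ ∈ t) :
    closure (graphOn G φ) ∩ ({θ} : Set UnitAddCircle) ×ˢ t = {(θ, φ θ)} := by
  refine Subset.antisymm ?_ ?_
  · rintro ⟨θ₁, y⟩ ⟨hmem, rfl, -⟩
    rw [eq_of_mk_mem_closure_graphOn (hφ θ₁ hθ) hmem]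
    rfl
  · rintro _ rfl
    exact ⟨subset_closure ⟨θ, hθ, rfl⟩, rfl, hφt⟩

theorem closure_graphOn_of_subset_of_subset_closure {S : Set UnitAddCircle} (hS : S ⊆ G)
    (hGS : G ⊆ closure S) (hφ : ContinuousOn φ G) :
    closure (graphOn S φ) = closure (graphOn G φ) := by
  refine Subset.antisymm (closure_mono (image_mono hS)) (closure_minimal ?_ isClosed_closure)
  rintro _ ⟨θ, hθ, rfl⟩
  exact ((continuousWithinAt_id.prodMk (hφ θ hθ)).mono hS).mem_closure_image (hGS hθ)

theorem exists_mem_closure_graphOn_dist_le_of_mapsTo {S : Set UnitAddCircle} {a b d : ℝ}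
    (hφ : MapsTo φ S (Icc a b)) (hφ' : MapsTo φ' S (Icc a b))
    (hd : ∀ θ ∈ S, |φ θ - φ' θ| ≤ d) {p : UnitAddCircle × ℝ}
    (hp : p ∈ closure (graphOn S φ)) :
    ∃ y ∈ Icc a b, (p.1, y) ∈ closure (graphOn S φ') ∧ dist p.2 y ≤ d := by
  set F : UnitAddCircle → UnitAddCircle × ℝ × ℝ := fun θ => (θ, φ θ, φ' θ)
  set K := closure (F '' S)
  have hKbox : K ⊆ univ ×ˢ Icc a b ×ˢ Icc a b :=
    closure_minimal (by rintro _ ⟨θ, hθ, rfl⟩; exact ⟨trivial, hφ hθ, hφ' hθ⟩)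
      (isClosed_univ.prod (isClosed_Icc.prod isClosed_Icc))
  have hK : IsCompact K :=
    (isCompact_univ.prod (isCompact_Icc.prod isCompact_Icc)).of_isClosed_subset
      isClosed_closure hKbox
  have hKd : K ⊆ {q | dist q.2.1 q.2.2 ≤ d} :=
    closure_minimal (by rintro _ ⟨θ, hθ, rfl⟩; exact hd θ hθ)
      (isClosed_le (by fun_prop) continuous_const)
  set π₁₂ : UnitAddCircle × ℝ × ℝ → UnitAddCircle × ℝ := fun q => (q.1, q.2.1)
  set π₁₃ : UnitAddCircle × ℝ × ℝ → UnitAddCircle × ℝ := fun q => (q.1, q.2.2)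
  have hgraph : graphOn S φ = π₁₂ '' (F '' S) := by rw [image_image]; rfl
  have hgraph' : graphOn S φ' = π₁₃ '' (F '' S) := by rw [image_image]; rfl
  have hp' : p ∈ π₁₂ '' K := by
    refine closure_minimal ?_ (hK.image (by fun_prop)).isClosed hp
    rw [hgraph]
    exact image_mono subset_closure
  obtain ⟨q, hqK, rfl⟩ := hp'
  refine ⟨q.2.2, (hKbox hqK).2.2, ?_, hKd hqK⟩
  rw [hgraph']
  exact image_closure_subset_closure_image (by fun_prop) ⟨q, hqK, rfl⟩

theorem exists_mem_closure_graphOn_dist_le {a b d : ℝ} (hGG' : Dense (G ∩ G'))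
    (hφc : ContinuousOn φ G) (hφ'c : ContinuousOn φ' G')
    (hφI : MapsTo φ G (Icc a b)) (hφ'I : MapsTo φ' G' (Icc a b))
    (hd : ∀ θ ∈ G ∩ G', |φ θ - φ' θ| ≤ d) :
    ∀ p ∈ closure (graphOn G φ),
      ∃ y ∈ Icc a b, (p.1, y) ∈ closure (graphOn G' φ') ∧ dist p.2 y ≤ d := by
  intro p hp
  rw [← closure_graphOn_of_subset_of_subset_closure inter_subset_left
    (fun θ _ => hGG' θ) hφc] at hp
  rw [← closure_graphOn_of_subset_of_subset_closure inter_subset_right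
    (fun θ _ => hGG' θ) hφ'c]
  exact exists_mem_closure_graphOn_dist_le_of_mapsTo (hφI.mono_left inter_subset_left)
    (hφ'I.mono_left inter_subset_right) hd hp

end PseudoCurve

theorem statement12_general (a b : ℝ)
    (G G' : Set UnitAddCircle)
    (hG : G ∈ residual UnitAddCircle) (hG' : G' ∈ residual UnitAddCircle)
    (φ φ' : UnitAddCircle → ℝ)
    (hφc : ContinuousOn φ G) (hφ'c : ContinuousOn φ' G')
    (hφI : ∀ θ ∈ G, φ θ ∈ Icc a b) (hφ'I : ∀ θ ∈ G', φ' θ ∈ Icc a b) :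
    hausdorffDist (closure (graphOn G φ)) (closure (graphOn G' φ')) ≤
      sSup (Set.range fun θ : UnitAddCircle =>
        hausdorffDist (closure (graphOn G φ) ∩ (({θ} : Set UnitAddCircle) ×ˢ Icc a b))
          (closure (graphOn G' φ') ∩ (({θ} : Set UnitAddCircle) ×ˢ Icc a b))) ∧
    sSup (Set.range fun θ : UnitAddCircle =>
        hausdorffDist (closure (graphOn G φ) ∩ (({θ} : Set UnitAddCircle) ×ˢ Icc a b))
          (closure (graphOn G' φ') ∩ (({θ} : Set UnitAddCircle) ×ˢ Icc a b)))
      = sSup ((fun θ => |φ θ - φ' θ|) '' (G ∩ G')) := by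
  have hdense : Dense (G ∩ G') := dense_of_mem_residual (inter_mem hG hG')
  set D := (fun θ => |φ θ - φ' θ|) '' (G ∩ G')
  have hDbdd : BddAbove D := ⟨b - a, by
    rintro _ ⟨θ, ⟨hθ, hθ'⟩, rfl⟩
    exact abs_sub_le_of_le_of_le (hφI θ hθ).1 (hφI θ hθ).2 (hφ'I θ hθ').1 (hφ'I θ hθ').2⟩
  have hD : ∀ θ ∈ G ∩ G', |φ θ - φ' θ| ≤ sSup D := fun θ hθ => le_csSup hDbdd ⟨θ, hθ, rfl⟩
  have hD0 : 0 ≤ sSup D := (abs_nonneg _).trans (hD _ hdense.nonempty.some_mem)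
  have hmatch := exists_mem_closure_graphOn_dist_le hdense hφc hφ'c hφI hφ'I hD
  have hmatch' := exists_mem_closure_graphOn_dist_le (inter_comm G G' ▸ hdense) hφ'c hφc hφ'I hφI
    fun θ hθ => abs_sub_comm (φ θ) (φ' θ) ▸ hD θ ⟨hθ.2, hθ.1⟩
  have hfiber (θ : UnitAddCircle) :=
    hausdorffDist_inter_prod_le_of_forall_exists_snd hD0 hmatch hmatch' {θ}
  have hsup_le := csSup_le (range_nonempty _) (forall_mem_range.2 hfiber)
  have hle_sup : sSup D ≤ _ := csSup_le (hdense.nonempty.image _) <| by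
    rintro _ ⟨θ, ⟨hθ, hθ'⟩, rfl⟩
    refine le_of_eq_of_le ?_ (le_csSup ⟨_, forall_mem_range.2 hfiber⟩ (mem_range_self θ))
    rw [closure_graphOn_inter_prod_singleton hθ hφc (hφI θ hθ),
      closure_graphOn_inter_prod_singleton hθ' hφ'c (hφ'I θ hθ'), hausdorffDist_singleton]
    simp [Prod.dist_eq, Real.dist_eq]
  have hglobal := hausdorffDist_le_of_forall_exists_snd hD0
    (fun p hp => (hmatch p hp).imp fun _ h => h.2) (fun p hp => (hmatch' p hp).imp fun _ h => h.2)
  exact ⟨hglobal.trans hle_sup, hsup_le.antisymm hle_sup⟩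

/-- For two pseudo-curves `PC, PC'`, the Hausdorff distance
`H(PC, PC')` is bounded by the supremum of the fiberwise Hausdorff distances, and this
supremum equals the supremum pseudo-distance `d∞` of the generators. -/
theorem statement12 (a b : ℝ) (hab : a ≤ b)
    (G G' : Set UnitAddCircle)
    (hG : G ∈ residual UnitAddCircle) (hG' : G' ∈ residual UnitAddCircle)
    (φ φ' : UnitAddCircle → ℝ)
    (hφc : ContinuousOn φ G) (hφ'c : ContinuousOn φ' G')
    (hφI : ∀ θ ∈ G, φ θ ∈ Icc a b) (hφ'I : ∀ θ ∈ G', φ' θ ∈ Icc a b) :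
    hausdorffDist (closure (graphOn G φ)) (closure (graphOn G' φ')) ≤
      sSup (Set.range fun θ : UnitAddCircle =>
        hausdorffDist (closure (graphOn G φ) ∩ (({θ} : Set UnitAddCircle) ×ˢ Icc a b))
          (closure (graphOn G' φ') ∩ (({θ} : Set UnitAddCircle) ×ˢ Icc a b))) ∧
    sSup (Set.range fun θ : UnitAddCircle =>
        hausdorffDist (closure (graphOn G φ) ∩ (({θ} : Set UnitAddCircle) ×ˢ Icc a b))
          (closure (graphOn G' φ') ∩ (({θ} : Set UnitAddCircle) ×ˢ Icc a b)))
      = sSup ((fun θ => |φ θ - φ' θ|) '' (G ∩ G')) :=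
  statement12_general a b G G' hG hG' φ φ' hφc hφ'c hφI hφ'I
end

section
/- Let ω ∈ ℝ be irrational and let f : S¹ × [-2,2] → [-2,2] be continuous with x ↦ f(θ,x) non-increasing for every θ, f(θ,-2) = 2 and f(θ,2) = -2 for every θ; set T(θ,x) = (θ + ω, f(θ,x)). Suppose A ⊆ S¹ × [-1,1] is a compact set with π(A) = S¹, every fiber A_θ = {x : (θ,x) ∈ A} is connected, T(A) = A, and A contains no arc of a curve (no nonempty open arc U ⊆ S¹ and continuous ξ : U → [-2,2] has its graph contained in A). Then T has no invariant curve: there is no continuous φ : S¹ → [-2,2] with f(θ, φ(θ)) = φ(θ + ω) for all θ ∈ S¹. -/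
/-!
Let `φ` be an invariant curve. Since `f` reverses the order of the fibres, `T` swaps the part of
`A` lying above the graph of `φ` with the part lying below it. The projections of these two parts
are closed and cover the circle, so by connectedness they meet; as the fibres of `A` are
intervals, the graph of `φ` meets `A`. The set of `θ` with `(θ, φ θ) ∈ A` is then a nonempty
closed set mapped into itself by the irrational rotation, hence the whole circle, and the graph
of `φ` would be a curve contained in `A`.
-/

open Set

/-- The quasiperiodic skew product `T(θ,x) = (θ + ω, f θ x)`. -/
noncomputable def skewProd (ω : ℝ) (f : UnitAddCircle → ℝ → ℝ) :
    UnitAddCircle × ℝ → UnitAddCircle × ℝ :=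
  fun p => (p.1 + (ω : UnitAddCircle), f p.1 p.2)

theorem eq_univ_of_isClosed_of_add_mem {G : Type*} [AddCommGroup G] [TopologicalSpace G]
    [IsTopologicalAddGroup G] [CompactSpace G] {a : G} (ha : DenseRange (· • a : ℤ → G))
    {C : Set G} (hC : IsClosed C) (hne : C.Nonempty) (hadd : ∀ x ∈ C, x + a ∈ C) :
    C = univ := by
  set S : ℕ → Set G := fun n => {y | y - n • a ∈ C}
  have hS_closed (n : ℕ) : IsClosed (S n) := hC.preimage (continuous_sub_right _)
  have hS_anti (n : ℕ) : S (n + 1) ⊆ S n := fun y hy => by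
    simpa [S, succ_nsmul, ← sub_sub] using hadd _ hy
  -- Unlike `C`, the set `K` of points whose whole backward orbit lies in `C` is invariant under
  -- `-a` as well, so it contains full orbits, which are dense.
  set K := ⋂ n, S n
  have hK_ne : K.Nonempty := by
    obtain ⟨x, hx⟩ := hne
    refine IsCompact.nonempty_iInter_of_sequence_nonempty_isCompact_isClosed S hS_anti
      (fun n => ⟨x + n • a, by simpa [S] using hx⟩) (hS_closed 0).isCompact hS_closed
  have hK_add (y : G) (hy : y ∈ K) : y + a ∈ K := by
    simp only [K, mem_iInter] at hy ⊢
    rintro (_ | n)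
    · simpa [S] using hadd _ (by simpa [S] using hy 0)
    · simpa [S, succ_nsmul, add_sub_add_right_eq_sub] using hy n
  have hK_sub (y : G) (hy : y ∈ K) : y - a ∈ K := by
    simp only [K, mem_iInter] at hy ⊢
    intro n
    simpa [S, succ_nsmul, sub_sub, add_comm] using hy (n + 1)
  obtain ⟨y, hy⟩ := hK_ne
  have horbit (n : ℤ) : y + n • a ∈ K := by
    induction n using Int.induction_on with
    | zero => simpa using hy
    | succ k ih => convert hK_add _ ih using 1; rw [add_zsmul, one_zsmul]; abel
    | pred k ih => convert hK_sub _ ih using 1; rw [sub_zsmul, one_zsmul]; abel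
  have hK_dense : Dense K :=
    ((Homeomorph.addLeft y).surjective.denseRange.comp ha (continuous_const_add y)).mono
      (range_subset_iff.2 horbit)
  have hK_closed : IsClosed K := isClosed_iInter hS_closed
  refine eq_univ_of_univ_subset ?_
  rw [← hK_dense.closure_eq, hK_closed.closure_eq]
  exact iInter_subset_of_subset 0 (by simp [S])

theorem PreconnectedSpace.inter_nonempty_of_mapsTo_swap {X : Type*} [TopologicalSpace X]
    [PreconnectedSpace X] [Nonempty X] {s t : Set X} (hs : IsClosed s) (ht : IsClosed t)
    (hst : s ∪ t = univ) {τ : X → X} (hτs : MapsTo τ s t) (hτt : MapsTo τ t s) :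
    (s ∩ t).Nonempty := by
  obtain ⟨x⟩ := ‹Nonempty X›
  have hx : x ∈ s ∪ t := hst ▸ mem_univ x
  have ⟨hs_ne, ht_ne⟩ : s.Nonempty ∧ t.Nonempty := by
    rcases hx with hx | hx
    exacts [⟨⟨x, hx⟩, ⟨τ x, hτs hx⟩⟩, ⟨⟨τ x, hτt hx⟩, ⟨x, hx⟩⟩]
  simpa using isPreconnected_closed_iff.1 isPreconnected_univ s t hs ht hst.ge
    (by simpa using hs_ne) (by simpa using ht_ne)

theorem exists_graph_mem_of_antitoneOn {X : Type*} [TopologicalSpace X] [PreconnectedSpace X]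
    [Nonempty X] [T2Space X] {A : Set (X × ℝ)} (hA : IsCompact A) (hA_fst : Prod.fst '' A = univ)
    (hA_fib : ∀ x, OrdConnected {y | (x, y) ∈ A}) {τ : X → X} {g : X → ℝ → ℝ}
    (hA_inv : ∀ p ∈ A, (τ p.1, g p.1 p.2) ∈ A) {I : Set ℝ} (hAI : ∀ p ∈ A, p.2 ∈ I)
    (hg : ∀ x, AntitoneOn (g x) I) {φ : X → ℝ} (hφ : Continuous φ) (hφI : ∀ x, φ x ∈ I)
    (hφ_inv : ∀ x, g x (φ x) = φ (τ x)) :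
    ∃ x, (x, φ x) ∈ A := by
  set above := Prod.fst '' (A ∩ {p | φ p.1 ≤ p.2})
  set below := Prod.fst '' (A ∩ {p | p.2 ≤ φ p.1})
  have h_above : IsClosed above :=
    ((hA.inter_right (isClosed_le (hφ.comp continuous_fst) continuous_snd)).image
      continuous_fst).isClosed
  have h_below : IsClosed below :=
    ((hA.inter_right (isClosed_le continuous_snd (hφ.comp continuous_fst))).image
      continuous_fst).isClosed
  have h_cover : above ∪ below = univ := by
    refine eq_univ_of_forall fun x => ?_
    obtain ⟨⟨x, y⟩, hxy, rfl⟩ := hA_fst.ge (mem_univ x)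
    rcases le_total (φ x) y with h | h
    exacts [Or.inl ⟨(x, y), ⟨hxy, h⟩, rfl⟩, Or.inr ⟨(x, y), ⟨hxy, h⟩, rfl⟩]
  have h_swap_above : MapsTo τ above below := by
    rintro _ ⟨⟨x, y⟩, ⟨hxy, hle⟩, rfl⟩
    refine ⟨_, ⟨hA_inv _ hxy, ?_⟩, rfl⟩
    simpa [hφ_inv] using hg x (hφI x) (hAI _ hxy) hle
  have h_swap_below : MapsTo τ below above := by
    rintro _ ⟨⟨x, y⟩, ⟨hxy, hle⟩, rfl⟩
    refine ⟨_, ⟨hA_inv _ hxy, ?_⟩, rfl⟩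
    simpa [hφ_inv] using hg x (hAI _ hxy) (hφI x) hle
  obtain ⟨x, ⟨⟨x₁, y⟩, ⟨hxy, hy⟩, hx₁⟩, ⟨⟨x₂, y'⟩, ⟨hxy', hy'⟩, hx₂⟩⟩ :=
    PreconnectedSpace.inter_nonempty_of_mapsTo_swap h_above h_below h_cover
      h_swap_above h_swap_below
  obtain rfl : x₁ = x₂ := hx₁.trans hx₂.symm
  exact ⟨x₁, (hA_fib x₁).out hxy' hxy ⟨hy', hy⟩⟩

theorem statement17_general (ω : ℝ) (hω : Irrational ω)
    (f : UnitAddCircle → ℝ → ℝ)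
    (hmono : ∀ θ, ∀ x ∈ Icc (-2:ℝ) 2, ∀ y ∈ Icc (-2:ℝ) 2, x ≤ y → f θ y ≤ f θ x)
    (A : Set (UnitAddCircle × ℝ)) (hAΩ : A ⊆ univ ×ˢ Icc (-1:ℝ) 1)
    (hAc : IsCompact A) (hAcirc : Prod.fst '' A = univ)
    (hfib : ∀ θ : UnitAddCircle, IsPreconnected {x : ℝ | (θ, x) ∈ A})
    (hAinv : skewProd ω f '' A = A)
    (hnoarc : ¬ ∃ (U : Set UnitAddCircle) (ξ : UnitAddCircle → ℝ),
      IsOpen U ∧ U.Nonempty ∧ IsPreconnected U ∧ ContinuousOn ξ U ∧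
      (∀ θ ∈ U, ξ θ ∈ Icc (-2:ℝ) 2) ∧ graphOn U ξ ⊆ A) :
    ¬ ∃ φ : UnitAddCircle → ℝ, Continuous φ ∧ (∀ θ, φ θ ∈ Icc (-2:ℝ) 2) ∧
        ∀ θ, f θ (φ θ) = φ (θ + (ω : UnitAddCircle)) := by
  rintro ⟨φ, hφ, hφI, hφ_inv⟩
  have hT : ∀ p ∈ A, skewProd ω f p ∈ A := fun p hp => hAinv ▸ mem_image_of_mem _ hp
  have hAI (p) (hp : p ∈ A) : p.2 ∈ Icc (-2:ℝ) 2 :=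
    Icc_subset_Icc (by norm_num) (by norm_num) (hAΩ hp).2
  set C : Set UnitAddCircle := {θ | (θ, φ θ) ∈ A}
  have h_meets : C.Nonempty :=
    exists_graph_mem_of_antitoneOn hAc hAcirc (fun θ => (hfib θ).ordConnected) hT hAI hmono hφ
      hφI hφ_inv
  have h_closed : IsClosed C := hAc.isClosed.preimage (continuous_id.prodMk hφ)
  have h_rot : ∀ θ ∈ C, θ + ω ∈ C := fun θ hθ => by
    simpa [C, skewProd, hφ_inv] using hT _ hθ
  have h_univ := eq_univ_of_isClosed_of_add_mem
    (AddCircle.denseRange_zsmul_coe_iff.2 (by simpa using hω)) h_closed h_meets h_rot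
  refine hnoarc ⟨univ, φ, isOpen_univ, univ_nonempty, isPreconnected_univ, hφ.continuousOn,
    fun θ _ => hφI θ, ?_⟩
  rintro _ ⟨θ, -, rfl⟩
  exact h_univ.ge (mem_univ θ)

/-- Let `T(θ,x) = (θ+ω, f(θ,x))` with `ω` irrational, `f` continuous
on `S¹ × [-2,2]` with values in `[-2,2]`, non-increasing on fibers, interchanging the
boundary circles. If there is a compact circular set `A ⊆ S¹ × [-1,1]` with connected
fibers, strongly `T`-invariant, containing no arc of a curve, then `T` admits no
invariant curve. -/
theorem statement17 (ω : ℝ) (hω : Irrational ω)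
    (f : UnitAddCircle → ℝ → ℝ)
    (hf : ContinuousOn (fun p : UnitAddCircle × ℝ => f p.1 p.2) (univ ×ˢ Icc (-2:ℝ) 2))
    (hmaps : ∀ θ, ∀ x ∈ Icc (-2:ℝ) 2, f θ x ∈ Icc (-2:ℝ) 2)
    (hmono : ∀ θ, ∀ x ∈ Icc (-2:ℝ) 2, ∀ y ∈ Icc (-2:ℝ) 2, x ≤ y → f θ y ≤ f θ x)
    (hbd : ∀ θ, f θ (-2) = 2 ∧ f θ 2 = -2)
    (A : Set (UnitAddCircle × ℝ)) (hAΩ : A ⊆ univ ×ˢ Icc (-1:ℝ) 1)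
    (hAc : IsCompact A) (hAcirc : Prod.fst '' A = univ)
    (hfib : ∀ θ : UnitAddCircle, IsPreconnected {x : ℝ | (θ, x) ∈ A})
    (hAinv : skewProd ω f '' A = A)
    (hnoarc : ¬ ∃ (U : Set UnitAddCircle) (ξ : UnitAddCircle → ℝ),
      IsOpen U ∧ U.Nonempty ∧ IsPreconnected U ∧ ContinuousOn ξ U ∧
      (∀ θ ∈ U, ξ θ ∈ Icc (-2:ℝ) 2) ∧ graphOn U ξ ⊆ A) :
    ¬ ∃ φ : UnitAddCircle → ℝ, Continuous φ ∧ (∀ θ, φ θ ∈ Icc (-2:ℝ) 2) ∧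
        ∀ θ, f θ (φ θ) = φ (θ + (ω : UnitAddCircle)) :=
  statement17_general ω hω f hmono A hAΩ hAc hAcirc hfib hAinv hnoarc
end
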